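/- Proposition 2 (Huber proximal step, matrix form): Given Y ∈ ℝ^{M×N}, z ∈ ℝ^N, α > 0, κ > 0, the unique minimizer of f(X) = α·h̃_κ(Xz) + (1/2)‖X−Y‖_F² is X̂ = Y − H_{z,α,κ}(Yz)z', where z := ‖z‖₂², h̃_κ applies the Huber function h_κ entrywise and sums, and H_{z,α,κ}(x) = x/(α^{-1}+z) if |x| ≤ κ(1+αz), H_{z,α,κ}(x) = ακ if x > κ(1+αz), and H_{z,α,κ}(x) = −ακ if x < −κ(1+αz), applied entrywise. -/
import Mathlib
open Matrix

noncomputable def huber (κ x : ℝ) : ℝ :=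
  if |x| ≤ κ then x ^ 2 / 2 else κ * |x| - κ ^ 2 / 2

noncomputable def hdev (κ x : ℝ) : ℝ :=
  if |x| ≤ κ then x else if 0 < x then κ else -κ

lemma huber_subgrad (κ a b : ℝ) (hκ : 0 < κ) :
    huber κ a + hdev κ a * (b - a) ≤ huber κ b := by
  unfold huber hdev
  rcases le_or_gt |a| κ with ha | ha <;> rcases le_or_gt |b| κ with hb | hb
  · simp only [if_pos ha, if_pos hb]
    nlinarith [sq_nonneg (a - b)]
  · simp only [if_pos ha, if_neg (not_le.2 hb)]
    rcases abs_cases a with ⟨ha1, _⟩ | ⟨ha1, _⟩ <;> rcases abs_cases b with ⟨hb1, _⟩ | ⟨hb1, _⟩ <;>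
      nlinarith [sq_nonneg (b - κ), sq_nonneg (b + κ), sq_nonneg (κ - a), sq_nonneg (κ + a)]
  · simp only [if_neg (not_le.2 ha), if_pos hb]
    rcases abs_cases a with ⟨ha1, ha2⟩ | ⟨ha1, ha2⟩
    · have : 0 < a := lt_of_lt_of_le hκ (ha1 ▸ ha.le)
      rw [if_pos this]; nlinarith [sq_nonneg (b - κ)]
    · have : ¬ (0 < a) := by nlinarith
      rw [if_neg this]; nlinarith [sq_nonneg (b + κ)]
  · simp only [if_neg (not_le.2 ha), if_neg (not_le.2 hb)]
    rcases abs_cases a with ⟨ha1, ha2⟩ | ⟨ha1, ha2⟩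
    · have h0 : 0 < a := lt_of_lt_of_le hκ (ha1 ▸ ha.le)
      rw [if_pos h0]
      rcases abs_cases b with ⟨hb1, _⟩ | ⟨hb1, _⟩ <;> nlinarith
    · have h0 : ¬ (0 < a) := by nlinarith
      rw [if_neg h0]
      rcases abs_cases b with ⟨hb1, _⟩ | ⟨hb1, _⟩ <;> nlinarith

lemma stationarity (α κ zn s : ℝ) (hα : 0 < α) (hκ : 0 < κ) (hzn : 0 ≤ zn) :
    α * hdev κ (s - (if |s| ≤ κ * (1 + α * zn) then s / (α⁻¹ + zn)
      else if s > κ * (1 + α * zn) then α * κ else -(α * κ)) * zn)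
    = (if |s| ≤ κ * (1 + α * zn) then s / (α⁻¹ + zn)
      else if s > κ * (1 + α * zn) then α * κ else -(α * κ)) := by
  have hp : 0 < α⁻¹ + zn := by positivity
  have hq : 0 < 1 + α * zn := by positivity
  rcases le_or_gt |s| (κ * (1 + α * zn)) with hs | hs
  · rw [if_pos hs]
    have ht : s - s / (α⁻¹ + zn) * zn = s / (1 + α * zn) := by
      field_simp
      ring
    rw [ht]
    have habs : |s / (1 + α * zn)| ≤ κ := by
      rw [abs_div, abs_of_pos hq, div_le_iff₀ hq]
      linarith
    rw [hdev, if_pos habs]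
    field_simp
  · rw [if_neg (not_le.2 hs)]
    rcases lt_or_ge (κ * (1 + α * zn)) s with hs2 | hs2
    · rw [if_pos hs2]
      have ht : κ < s - α * κ * zn := by nlinarith
      have h1 : ¬ |s - α * κ * zn| ≤ κ := by
        rw [abs_le]; push_neg; intro _; linarith
      rw [hdev, if_neg h1, if_pos (by linarith : (0:ℝ) < s - α * κ * zn)]
    · rw [if_neg (not_lt.2 hs2)]
      have hsneg : s < -(κ * (1 + α * zn)) := by
        rcases abs_cases s with ⟨h1, _⟩ | ⟨h1, _⟩ <;> rw [h1] at hs <;> linarith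
      have ht : s - -(α * κ) * zn < -κ := by nlinarith
      have h1 : ¬ |s - -(α * κ) * zn| ≤ κ := by
        rw [abs_le]; push_neg; intro h; linarith
      rw [hdev, if_neg h1, if_neg (by linarith : ¬ (0:ℝ) < s - -(α * κ) * zn)]
      ring

theorem prop2_huber_prox_matrix {M N : ℕ}
    (Y : Matrix (Fin M) (Fin N) ℝ) (z : Fin N → ℝ) (α κ : ℝ)
    (hα : 0 < α) (hκ : 0 < κ) :
    let zn : ℝ := ∑ j, z j ^ 2
    let H : ℝ → ℝ := fun x =>
      if |x| ≤ κ * (1 + α * zn) then x / (α⁻¹ + zn)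
      else if x > κ * (1 + α * zn) then α * κ else -(α * κ)
    let Xhat : Matrix (Fin M) (Fin N) ℝ :=
      Y - Matrix.of (fun i j => H (Y.mulVec z i) * z j)
    ∀ X : Matrix (Fin M) (Fin N) ℝ, X ≠ Xhat →
      α * (∑ i, huber κ (Xhat.mulVec z i)) +
          (1 / 2) * (∑ i, ∑ j, (Xhat i j - Y i j) ^ 2) <
        α * (∑ i, huber κ (X.mulVec z i)) +
          (1 / 2) * (∑ i, ∑ j, (X i j - Y i j) ^ 2) := by
  intro zn H Xhat X hX
  have hzn : 0 ≤ zn := Finset.sum_nonneg fun j _ => sq_nonneg _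
  have hXe : ∀ i j, Xhat i j = Y i j - H (Y.mulVec z i) * z j := by
    intro i j; simp [Xhat, Matrix.sub_apply]
  have hXm : ∀ i, Xhat.mulVec z i = Y.mulVec z i - H (Y.mulVec z i) * zn := by
    intro i
    simp only [Matrix.mulVec, dotProduct, hXe, sub_mul, Finset.sum_sub_distrib]
    congr 1
    calc ∑ j, H (Y.mulVec z i) * z j * z j
        = H (Y.mulVec z i) * ∑ j, z j ^ 2 := by
          rw [Finset.mul_sum]; exact Finset.sum_congr rfl fun j _ => by ring
      _ = H (Y.mulVec z i) * zn := rfl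
  have hst : ∀ i, α * hdev κ (Xhat.mulVec z i) = H (Y.mulVec z i) := by
    intro i
    rw [hXm i]
    simp only [H]
    exact stationarity α κ zn (Y.mulVec z i) hα hκ hzn
  have row : ∀ i,
      α * huber κ (Xhat.mulVec z i) + (1/2) * ∑ j, (Xhat i j - Y i j)^2
        + (1/2) * ∑ j, (X i j - Xhat i j)^2
      ≤ α * huber κ (X.mulVec z i) + (1/2) * ∑ j, (X i j - Y i j)^2 := by
    intro i
    have hsub := mul_le_mul_of_nonneg_left
      (huber_subgrad κ (Xhat.mulVec z i) (X.mulVec z i) hκ) hα.le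
    have hd : X.mulVec z i - Xhat.mulVec z i = ∑ j, (X i j - Xhat i j) * z j := by
      simp [Matrix.mulVec, dotProduct, sub_mul, Finset.sum_sub_distrib]
    have hq : ∑ j, (X i j - Y i j)^2
        = ∑ j, (Xhat i j - Y i j)^2
          + (-2 * H (Y.mulVec z i)) * ∑ j, (X i j - Xhat i j) * z j
          + ∑ j, (X i j - Xhat i j)^2 := by
      rw [Finset.mul_sum, ← Finset.sum_add_distrib, ← Finset.sum_add_distrib]
      refine Finset.sum_congr rfl fun j _ => ?_
      rw [hXe i j]; ring
    rw [mul_add, ← mul_assoc, hst i, hd] at hsub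
    rw [hq]
    linarith
  have hpos : 0 < ∑ i, ∑ j, (X i j - Xhat i j)^2 := by
    have hne : ∃ i j, X i j ≠ Xhat i j := by
      by_contra h; push_neg at h; exact hX (by ext i j; exact h i j)
    obtain ⟨i, j, hij⟩ := hne
    have h1 : 0 < ∑ j', (X i j' - Xhat i j')^2 :=
      Finset.sum_pos' (fun _ _ => sq_nonneg _)
        ⟨j, Finset.mem_univ j,
          lt_of_le_of_ne (sq_nonneg _) (Ne.symm (pow_ne_zero 2 (sub_ne_zero.mpr hij)))⟩
    exact Finset.sum_pos' (fun i' _ => Finset.sum_nonneg fun _ _ => sq_nonneg _)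
      ⟨i, Finset.mem_univ i, h1⟩
  have key : α * (∑ i, huber κ (Xhat.mulVec z i)) +
      (1/2) * (∑ i, ∑ j, (Xhat i j - Y i j)^2) +
      (1/2) * (∑ i, ∑ j, (X i j - Xhat i j)^2)
      ≤ α * (∑ i, huber κ (X.mulVec z i)) + (1/2) * (∑ i, ∑ j, (X i j - Y i j)^2) := by
    have hsum := Finset.sum_le_sum (fun i (_ : i ∈ Finset.univ) => row i)
    simpa [Finset.sum_add_distrib, Finset.mul_sum] using hsum
  linarith
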